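/- arXiv:1809.03022 — 2 statements merged into one kernel-verified Lean document; each statement's English description precedes it below -/
import Mathlib

section
/- Let f be analytic in the open unit disc Δ = {z ∈ ℂ : |z| < 1} with f(0) = 0 and f′(0) = 1, and suppose f′(z) ≠ 0 for all z ∈ Δ. If Re(1 + z·f″(z)/f′(z)) < 3/2 for all z ∈ Δ, then Re(1/f′(z)) > 1/2 for all z ∈ Δ. -/
/-!
Put `w = f' - 1`, so `w 0 = 0`, and `Re (1 / f') > 1 / 2` wherever `‖w‖ < 1`. If `‖w‖ ≥ 1`
somewhere, Jack's lemma gives a point `z₀` with `‖w z₀‖ = 1` and `z₀ w'(z₀) = k w(z₀)` for a real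
`k ≥ 1`. There `1 + z₀ f''/f' = 1 + k w₀ / (1 + w₀)`, and `Re (w₀ / (1 + w₀)) = 1 / 2` because
`‖w₀‖ = 1`, so the real part is `1 + k / 2 ≥ 3 / 2`.

For Jack's lemma take `z₀` of least modulus with `‖w z₀‖ ≥ 1`. The Schwarz lemma on the disc of
radius `‖z₀‖` gives `‖w z‖ ≤ ‖z‖ / ‖z₀‖` there, so `Re (w · conj w₀)` is maximal at `z₀` on the
circle through `z₀` and grows at rate at least `1` along the radius; hence `z₀ w'(z₀) conj w₀` is
real and at least `1`.
-/

open Complex Metric ComplexConjugate Set Filter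

lemma Complex.one_half_lt_re_one_div_of_norm_sub_one_lt_one {g : ℂ} (h : ‖g - 1‖ < 1) :
    1 / 2 < (1 / g).re := by
  have hsq : normSq (g - 1) < 1 := by
    rw [normSq_eq_norm_sq]; nlinarith [norm_nonneg (g - 1)]
  have hg : normSq g < 2 * g.re := by
    simp only [normSq_apply, sub_re, one_re, sub_im, one_im] at hsq ⊢; nlinarith
  have hpos : 0 < normSq g := normSq_pos.2 (by rintro rfl; simp at hg)
  rw [one_div g, inv_re, lt_div_iff₀ hpos]
  linarith

lemma Complex.re_mul_div_one_add_of_norm_eq_one {s : ℂ} (hs : ‖s‖ = 1) (hs1 : 1 + s ≠ 0) (k : ℝ) :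
    (k * s / (1 + s)).re = k / 2 := by
  have hn : s.re * s.re + s.im * s.im = 1 := by
    rw [← normSq_apply, normSq_eq_norm_sq, hs, one_pow]
  have hd : normSq (1 + s) = 2 * (1 + s.re) := by
    simp only [normSq_apply, add_re, one_re, add_im, one_im]; linarith
  have hd0 : 1 + s.re ≠ 0 := by
    intro h; apply hs1; rw [← normSq_eq_zero, hd, h, mul_zero]
  rw [mul_div_assoc, re_ofReal_mul, div_re, hd]
  simp only [add_re, one_re, add_im, one_im, zero_add]
  field_simp
  linear_combination k * hn

lemma Complex.re_mul_conj_le_norm_mul_norm (u v : ℂ) : (u * conj v).re ≤ ‖u‖ * ‖v‖ :=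
  (re_le_norm _).trans_eq (by rw [norm_mul, norm_conj])

section

variable {w : ℂ → ℂ}

lemma exists_norm_eq_one_and_norm_le_one_on_closedBall {R : ℝ} (hw : ContinuousOn w (ball 0 R))
    (hw0 : ‖w 0‖ < 1) {z₁ : ℂ} (hz₁ : z₁ ∈ ball (0 : ℂ) R) (h₁ : 1 ≤ ‖w z₁‖) :
    ∃ z₀ ∈ ball (0 : ℂ) R, ‖w z₀‖ = 1 ∧ ∀ z ∈ closedBall (0 : ℂ) ‖z₀‖, ‖w z‖ ≤ 1 := by
  have hsub : closedBall (0 : ℂ) ‖z₁‖ ⊆ ball 0 R :=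
    closedBall_subset_ball (mem_ball_zero_iff.1 hz₁)
  have hclosed {r : ℝ} (hr : r ≤ ‖z₁‖) {s : Set ℝ} (hs : IsClosed s) :
      IsClosed (closedBall (0 : ℂ) r ∩ (‖w ·‖) ⁻¹' s) :=
    (hw.mono ((closedBall_subset_closedBall hr).trans hsub)).norm.preimage_isClosed_of_isClosed
      isClosed_closedBall hs
  -- `z₀` is a point of least modulus with `1 ≤ ‖w z₀‖`
  obtain ⟨z₀, ⟨hz₀₁, hz₀⟩, hmin⟩ :=
    ((isCompact_closedBall (0 : ℂ) ‖z₁‖).of_isClosed_subset (hclosed le_rfl isClosed_Ici)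
      inter_subset_left).exists_isMinOn
      ⟨z₁, mem_closedBall_zero_iff.2 le_rfl, h₁⟩ continuous_norm.continuousOn
  rw [mem_closedBall_zero_iff] at hz₀₁
  have hlt : ball (0 : ℂ) ‖z₀‖ ⊆ closedBall 0 ‖z₀‖ ∩ (‖w ·‖) ⁻¹' Iic 1 := by
    intro z hz
    refine ⟨ball_subset_closedBall hz, show ‖w z‖ ≤ 1 from ?_⟩
    by_contra! h
    have hz' := mem_ball_zero_iff.1 hz
    exact hz'.not_ge (hmin ⟨mem_closedBall_zero_iff.2 (hz'.le.trans hz₀₁), h.le⟩)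
  have hr : ‖z₀‖ ≠ 0 := by
    rintro hr
    rw [norm_eq_zero.1 hr] at hz₀
    exact hw0.not_ge hz₀
  have hle : ∀ z ∈ closedBall (0 : ℂ) ‖z₀‖, ‖w z‖ ≤ 1 := by
    rw [← closure_ball 0 hr]
    exact fun z hz => (closure_minimal hlt (hclosed hz₀₁ isClosed_Iic) hz).2
  exact ⟨z₀, hsub (mem_closedBall_zero_iff.2 hz₀₁),
    (hle z₀ (mem_closedBall_zero_iff.2 le_rfl)).antisymm hz₀, hle⟩

lemma norm_le_norm_div_of_norm_le_one_on_closedBall {r : ℝ} (hw : DifferentiableOn ℂ w (ball 0 r))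
    (hw0 : w 0 = 0) (hle : ∀ z ∈ closedBall (0 : ℂ) r, ‖w z‖ ≤ 1) {z : ℂ}
    (hz : z ∈ closedBall (0 : ℂ) r) : ‖w z‖ ≤ ‖z‖ / r := by
  rcases (mem_closedBall_zero_iff.1 hz).lt_or_eq with hlt | heq
  · have hmaps : MapsTo w (ball 0 r) (closedBall (w 0) 1) := by
      rw [hw0]; exact fun x hx => mem_closedBall_zero_iff.2 (hle x (ball_subset_closedBall hx))
    simpa [hw0, div_eq_inv_mul] using
      dist_le_div_mul_dist_of_mapsTo_ball hw hmaps (mem_ball_zero_iff.2 hlt)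
  · rcases eq_or_ne r 0 with rfl | hr
    · simp [norm_eq_zero.1 heq, hw0]
    · rw [heq, div_self hr]; exact hle z hz

lemma hasDerivAt_re_comp_mul_conj {γ : ℝ → ℂ} {γ' : ℂ} {t : ℝ}
    (hw : DifferentiableAt ℂ w (γ t)) (hγ : HasDerivAt γ γ' t) (c : ℂ) :
    HasDerivAt (fun s => (w (γ s) * conj c).re) (deriv w (γ t) * γ' * conj c).re t :=
  reCLM.hasFDerivAt.comp_hasDerivAt t ((hw.hasDerivAt.comp t hγ).mul_const (conj c))

lemma one_le_re_mul_deriv_mul_conj {z₀ : ℂ} (hw : DifferentiableAt ℂ w z₀) (hwz₀ : ‖w z₀‖ = 1)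
    (hle : ∀ t ∈ Icc (0 : ℝ) 1, ‖w (t * z₀)‖ ≤ t) :
    1 ≤ (z₀ * deriv w z₀ * conj (w z₀)).re := by
  have hγ : HasDerivAt (fun t : ℝ => (t : ℂ) * z₀) z₀ 1 := by
    simpa using (hasDerivAt_id (1 : ℝ)).ofReal_comp.mul_const z₀
  have hd := (hasDerivAt_re_comp_mul_conj (by simpa using hw) hγ (w z₀)).sub
    (hasDerivAt_id' (1 : ℝ))
  rw [ofReal_one, one_mul, mul_comm _ z₀] at hd
  have hmax : IsMaxOn (fun t : ℝ => (w (t * z₀) * conj (w z₀)).re - t) (Icc 0 1) 1 := by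
    intro t ht
    have h1 : (w z₀ * conj (w z₀)).re = 1 := by
      rw [mul_conj, normSq_eq_norm_sq, hwz₀]; norm_num
    have h2 := re_mul_conj_le_norm_mul_norm (w (t * z₀)) (w z₀)
    rw [hwz₀, mul_one] at h2
    simp only [mem_ofPred_eq, ofReal_one, one_mul, h1, sub_self]
    linarith [hle t ht]
  have hcone : (-1 : ℝ) ∈ posTangentConeAt (Icc 0 1) 1 :=
    mem_posTangentConeAt_of_segment_subset (by rw [segment_symm]; norm_num [segment_eq_Icc])
  have := hmax.localize.hasFDerivWithinAt_nonpos hd.hasFDerivAt.hasFDerivWithinAt hcone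
  rw [ContinuousLinearMap.toSpanSingleton_apply, smul_eq_mul] at this
  linarith

lemma im_mul_deriv_mul_conj_eq_zero {z₀ : ℂ} (hw : DifferentiableAt ℂ w z₀)
    (hle : ∀ θ : ℝ, ‖w (z₀ * exp (θ * I))‖ ≤ ‖w z₀‖) :
    (z₀ * deriv w z₀ * conj (w z₀)).im = 0 := by
  have hγ : HasDerivAt (fun θ : ℝ => z₀ * exp (θ * I)) (z₀ * I) 0 := by
    simpa using (((hasDerivAt_id (0 : ℝ)).ofReal_comp.mul_const I).cexp).const_mul z₀
  have hmax : IsLocalMax (fun θ : ℝ => (w (z₀ * exp (θ * I)) * conj (w z₀)).re) 0 := by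
    refine IsMaxOn.isLocalMax (s := univ) (fun θ _ => ?_) univ_mem
    have h0 : (w z₀ * conj (w z₀)).re = ‖w z₀‖ * ‖w z₀‖ := by
      rw [mul_conj, normSq_eq_norm_sq, ofReal_re, sq]
    simp only [mem_ofPred_eq, ofReal_zero, zero_mul, exp_zero, mul_one, h0]
    exact (re_mul_conj_le_norm_mul_norm _ _).trans
      (mul_le_mul_of_nonneg_right (hle θ) (norm_nonneg _))
  have := hmax.hasDerivAt_eq_zero (hasDerivAt_re_comp_mul_conj (by simpa using hw) hγ (w z₀))
  rw [ofReal_zero, zero_mul, exp_zero, mul_one,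
    show deriv w z₀ * (z₀ * I) * conj (w z₀) = I * (z₀ * deriv w z₀ * conj (w z₀)) by ring,
    I_mul_re, neg_eq_zero] at this
  exact this

lemma exists_one_le_mul_deriv_eq_real_mul {z₀ : ℂ} (hw : DifferentiableAt ℂ w z₀)
    (hwz₀ : ‖w z₀‖ = 1) (hle : ∀ z ∈ closedBall (0 : ℂ) ‖z₀‖, ‖w z‖ ≤ ‖z‖ / ‖z₀‖) :
    ∃ k : ℝ, 1 ≤ k ∧ z₀ * deriv w z₀ = k * w z₀ := by
  have hr : ‖z₀‖ ≠ 0 := by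
    intro h
    have := hle z₀ (mem_closedBall_zero_iff.2 le_rfl)
    rw [hwz₀, h, div_zero] at this
    exact one_pos.not_ge this
  have hradial (t : ℝ) (ht : t ∈ Icc (0 : ℝ) 1) : ‖w (t * z₀)‖ ≤ t := by
    have hnorm : ‖(t : ℂ) * z₀‖ = t * ‖z₀‖ := by
      rw [norm_mul, norm_real, Real.norm_of_nonneg ht.1]
    have := hle (t * z₀) <| mem_closedBall_zero_iff.2 <| by
      rw [hnorm]; nlinarith [ht.2, norm_nonneg z₀]
    rwa [hnorm, mul_div_cancel_right₀ _ hr] at this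
  have htangential (θ : ℝ) : ‖w (z₀ * exp (θ * I))‖ ≤ ‖w z₀‖ := by
    have := hle (z₀ * exp (θ * I)) (by simp [norm_exp_ofReal_mul_I])
    rwa [norm_mul, norm_exp_ofReal_mul_I, mul_one, div_self hr, ← hwz₀] at this
  set A := z₀ * deriv w z₀ * conj (w z₀) with hA
  have hA_real : (A.re : ℂ) = A :=
    Complex.ext rfl ((ofReal_im _).trans (im_mul_deriv_mul_conj_eq_zero hw htangential).symm)
  refine ⟨A.re, one_le_re_mul_deriv_mul_conj hw hwz₀ hradial, ?_⟩
  have hconj : w z₀ * conj (w z₀) = 1 := by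
    rw [mul_conj, normSq_eq_norm_sq, hwz₀]; norm_num
  calc z₀ * deriv w z₀ = z₀ * deriv w z₀ * (w z₀ * conj (w z₀)) := by rw [hconj, mul_one]
    _ = A.re * w z₀ := by rw [hA_real, hA]; ring

theorem jack_lemma {R : ℝ} (hw : DifferentiableOn ℂ w (ball 0 R)) (hw0 : w 0 = 0) {z₁ : ℂ}
    (hz₁ : z₁ ∈ ball (0 : ℂ) R) (h₁ : 1 ≤ ‖w z₁‖) :
    ∃ z₀ ∈ ball (0 : ℂ) R, ‖w z₀‖ = 1 ∧ ∃ k : ℝ, 1 ≤ k ∧ z₀ * deriv w z₀ = k * w z₀ := by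
  obtain ⟨z₀, hz₀, hwz₀, hle⟩ :=
    exists_norm_eq_one_and_norm_le_one_on_closedBall hw.continuousOn (by simp [hw0]) hz₁ h₁
  have hsub : ball (0 : ℂ) ‖z₀‖ ⊆ ball 0 R := ball_subset_ball (mem_ball_zero_iff.1 hz₀).le
  refine ⟨z₀, hz₀, hwz₀, exists_one_le_mul_deriv_eq_real_mul
    (hw.differentiableAt (isOpen_ball.mem_nhds hz₀)) hwz₀ fun z hz => ?_⟩
  exact norm_le_norm_div_of_norm_le_one_on_closedBall (hw.mono hsub) hw0 hle hz

end

theorem re_inv_deriv_gt_half_of_N32_general (f : ℂ → ℂ)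
    (hf : DifferentiableOn ℂ f (ball (0:ℂ) 1))
    (hf'0 : deriv f 0 = 1)
    (hne : ∀ z ∈ ball (0:ℂ) 1, deriv f z ≠ 0)
    (hre : ∀ z ∈ ball (0:ℂ) 1, (1 + z * deriv (deriv f) z / deriv f z).re < 3 / 2) :
    ∀ z ∈ ball (0:ℂ) 1, 1 / 2 < (1 / deriv f z).re := by
  have hf' : DifferentiableOn ℂ (deriv f) (ball 0 1) := hf.deriv isOpen_ball
  intro z hz
  refine one_half_lt_re_one_div_of_norm_sub_one_lt_one (not_le.1 fun h => ?_)
  obtain ⟨z₀, hz₀, hwz₀, k, hk, hderiv⟩ :=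
    jack_lemma (w := fun z => deriv f z - 1) (hf'.sub_const 1) (by simp [hf'0]) hz h
  set s := deriv f z₀ - 1 with hs
  have hf'z₀ : deriv f z₀ = 1 + s := by rw [hs]; ring
  rw [deriv_sub_const] at hderiv
  have hval : (1 + z₀ * deriv (deriv f) z₀ / deriv f z₀).re = 1 + k / 2 := by
    rw [hderiv, hf'z₀, add_re, one_re,
      re_mul_div_one_add_of_norm_eq_one hwz₀ (hf'z₀ ▸ hne z₀ hz₀)]
  linarith [hre z₀ hz₀]

theorem re_inv_deriv_gt_half_of_N32 (f : ℂ → ℂ)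
    (hf : DifferentiableOn ℂ f (ball (0:ℂ) 1))
    (hf0 : f 0 = 0) (hf'0 : deriv f 0 = 1)
    (hne : ∀ z ∈ ball (0:ℂ) 1, deriv f z ≠ 0)
    (hre : ∀ z ∈ ball (0:ℂ) 1, (1 + z * deriv (deriv f) z / deriv f z).re < 3 / 2) :
    ∀ z ∈ ball (0:ℂ) 1, 1 / 2 < (1 / deriv f z).re :=
  re_inv_deriv_gt_half_of_N32_general f hf hf'0 hne hre
end

section
/- Let f be analytic in the open unit disc Δ = {z ∈ ℂ : |z| < 1} with f(0) = 0 and f′(0) = 1, and suppose f′(z) ≠ 0 for all z ∈ Δ. If Re(1 + z·f″(z)/f′(z)) < 3/2 for all z ∈ Δ, then |f′(z) − 1| < 1 for all z ∈ Δ. -/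
/-!
Put `w = f' - 1`, so `w 0 = 0`. If `‖w z‖ ≥ 1`, let `z₀` maximise `‖w‖` on the closed disc of
radius `‖z‖`. Jack's lemma gives `z₀ w'(z₀) = k w(z₀)` with `k ≥ 1`: by the Schwarz lemma
`‖w (t z₀)‖ ≤ t ‖w z₀‖`, so the radial derivative of `‖w‖²` at `z₀` is at least `2 ‖w z₀‖²`,
while its tangential derivative vanishes. Then `1 + z₀ f''(z₀) / f'(z₀) = 1 + k w / (1 + w)`
with `w = w(z₀)`, and `Re (w / (1 + w)) ≥ 1/2` as soon as `‖w‖ ≥ 1`, contradicting the bound `3/2`.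
-/

open Complex ComplexConjugate Metric Set Filter

theorem HasDerivAt.nonneg_of_isLocalMaxOn_Iio {φ : ℝ → ℝ} {a φ' : ℝ} (hφ : HasDerivAt φ φ' a)
    (h : IsLocalMaxOn φ (Iio a) a) : 0 ≤ φ' := by
  have hy : (-1 : ℝ) ∈ posTangentConeAt (Iio a) a :=
    mem_posTangentConeAt_of_frequently_mem <| Eventually.frequently <|
      eventually_nhdsWithin_of_forall fun t (ht : 0 < t) => by simpa using ht
  simpa using h.hasFDerivWithinAt_nonpos hφ.hasFDerivAt.hasFDerivWithinAt hy

theorem hasDerivAt_norm_sq_comp {w : ℂ → ℂ} {γ : ℝ → ℂ} {γ' : ℂ} {s : ℝ}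
    (hw : DifferentiableAt ℂ w (γ s)) (hγ : HasDerivAt γ γ' s) :
    HasDerivAt (fun t => ‖w (γ t)‖ ^ 2) (2 * (deriv w (γ s) * γ' * conj (w (γ s))).re) s := by
  simpa [Complex.inner] using (hw.hasDerivAt.comp s hγ).norm_sq

theorem norm_sq_le_re_mul_deriv_mul_conj {w : ℂ → ℂ} {z₀ : ℂ}
    (hw : DifferentiableOn ℂ w (ball 0 ‖z₀‖)) (hw₀ : DifferentiableAt ℂ w z₀) (h0 : w 0 = 0)
    (hmax : IsMaxOn (‖w ·‖) (ball 0 ‖z₀‖) z₀) :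
    ‖w z₀‖ ^ 2 ≤ (z₀ * deriv w z₀ * conj (w z₀)).re := by
  rcases eq_or_ne z₀ 0 with rfl | hz₀
  · simp [h0]
  have hschwarz : ∀ t ∈ Ioo (-1 : ℝ) 1, ‖w (t * z₀)‖ ≤ |t| * ‖w z₀‖ := fun t ht => by
    have hmem : (t : ℂ) * z₀ ∈ ball 0 ‖z₀‖ := by
      rw [mem_ball_zero_iff, norm_mul, norm_real, Real.norm_eq_abs]
      exact mul_lt_of_lt_one_left (norm_pos_iff.2 hz₀) (abs_lt.2 ht)
    have := Complex.dist_le_div_mul_dist_of_mapsTo_ball hw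
      (fun ζ hζ => by simpa [h0] using hmax hζ) hmem
    rwa [h0, dist_zero_right, dist_zero_right, norm_mul, norm_real, Real.norm_eq_abs,
      div_mul_comm, mul_div_assoc, div_self (norm_ne_zero_iff.2 hz₀), mul_one] at this
  have hmax_radial : IsLocalMaxOn
      ((fun t : ℝ => ‖w (t * z₀)‖ ^ 2) - fun t => t ^ 2 * ‖w z₀‖ ^ 2) (Iio 1) 1 := by
    filter_upwards [Ioo_mem_nhdsLT (show (-1 : ℝ) < 1 by norm_num)] with t ht
    simpa [mul_pow] using pow_le_pow_left₀ (norm_nonneg _) (hschwarz t ht) 2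
  have hγ : HasDerivAt (fun t : ℝ => (t : ℂ) * z₀) z₀ 1 := by
    simpa using (ofRealCLM.hasDerivAt (x := (1 : ℝ))).mul_const z₀
  have hφ := (hasDerivAt_norm_sq_comp (by simpa using hw₀) hγ).sub
    ((hasDerivAt_pow 2 (1 : ℝ)).mul_const (‖w z₀‖ ^ 2))
  have hderiv_nonneg := hφ.nonneg_of_isLocalMaxOn_Iio hmax_radial
  simp only [ofReal_one, one_mul] at hderiv_nonneg
  rw [mul_comm (deriv w z₀) z₀] at hderiv_nonneg
  norm_num at hderiv_nonneg ⊢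
  linarith

theorem im_mul_deriv_mul_conj_eq_zero_s9 {w : ℂ → ℂ} {z₀ : ℂ} (hw₀ : DifferentiableAt ℂ w z₀)
    (hmax : IsMaxOn (‖w ·‖) (sphere 0 ‖z₀‖) z₀) :
    (z₀ * deriv w z₀ * conj (w z₀)).im = 0 := by
  have hγ : HasDerivAt (fun θ : ℝ => z₀ * exp (θ * I)) (z₀ * I) 0 := by
    simpa using ((ofRealCLM.hasDerivAt (x := (0 : ℝ))).mul_const I).cexp.const_mul z₀
  have hlocmax : IsLocalMax (fun θ : ℝ => ‖w (z₀ * exp (θ * I))‖ ^ 2) 0 :=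
    Eventually.of_forall fun θ => by
      have hθ : z₀ * exp (θ * I) ∈ sphere 0 ‖z₀‖ := by simp
      simpa using pow_le_pow_left₀ (norm_nonneg _) (hmax hθ) 2
  have hderiv_zero :=
    hlocmax.hasDerivAt_eq_zero (hasDerivAt_norm_sq_comp (by simpa using hw₀) hγ)
  simp only [ofReal_zero, zero_mul, exp_zero, mul_one] at hderiv_zero
  rw [show deriv w z₀ * (z₀ * I) * conj (w z₀) = z₀ * deriv w z₀ * conj (w z₀) * I by ring,
    mul_I_re] at hderiv_zero
  linarith

/-- Jack's lemma. -/
theorem exists_one_le_mul_deriv_eq_mul {w : ℂ → ℂ} {z₀ : ℂ}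
    (hw : DifferentiableOn ℂ w (ball 0 ‖z₀‖)) (hw₀ : DifferentiableAt ℂ w z₀) (h0 : w 0 = 0)
    (hwz₀ : w z₀ ≠ 0) (hmax : IsMaxOn (‖w ·‖) (closedBall 0 ‖z₀‖) z₀) :
    ∃ k : ℝ, 1 ≤ k ∧ z₀ * deriv w z₀ = k * w z₀ := by
  set q := z₀ * deriv w z₀ * conj (w z₀) with hq_def
  have hre : ‖w z₀‖ ^ 2 ≤ q.re :=
    norm_sq_le_re_mul_deriv_mul_conj hw hw₀ h0 (hmax.on_subset ball_subset_closedBall)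
  have him : q.im = 0 :=
    im_mul_deriv_mul_conj_eq_zero_s9 hw₀ (hmax.on_subset sphere_subset_closedBall)
  have hM : 0 < ‖w z₀‖ ^ 2 := by positivity
  refine ⟨q.re / ‖w z₀‖ ^ 2, (one_le_div hM).2 hre, ?_⟩
  have hq : q = q.re := ext rfl (by simpa using him)
  calc z₀ * deriv w z₀ = q * w z₀ / (‖w z₀‖ : ℂ) ^ 2 := by
        rw [hq_def, mul_assoc _ (conj _), conj_mul']
        field_simp [norm_ne_zero_iff.2 hwz₀]
    _ = (q.re / ‖w z₀‖ ^ 2 : ℝ) * w z₀ := by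
        conv_lhs => rw [hq]
        push_cast
        ring

theorem half_le_re_div_one_add {w : ℂ} (hw : 1 ≤ ‖w‖) (h : 1 + w ≠ 0) :
    1 / 2 ≤ (w / (1 + w)).re := by
  -- `2 Re (w (1 + conj w)) - ‖1 + w‖² = ‖w‖² - 1`
  have hn : 1 ≤ w.re * w.re + w.im * w.im := by
    rw [← normSq_apply, normSq_eq_norm_sq]; nlinarith
  rw [div_re, ← add_div, le_div_iff₀ (normSq_pos.2 h), normSq_apply]
  simp only [add_re, one_re, add_im, one_im]
  nlinarith

theorem half_le_re_mul_div_one_add {w : ℂ} {k : ℝ} (hw : 1 ≤ ‖w‖) (h : 1 + w ≠ 0) (hk : 1 ≤ k) :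
    1 / 2 ≤ (k * w / (1 + w)).re := by
  have h₁ := half_le_re_div_one_add hw h
  rw [mul_div_assoc, re_ofReal_mul]
  nlinarith

theorem deriv_near_one_of_N32_general (f : ℂ → ℂ)
    (hf : DifferentiableOn ℂ f (ball (0:ℂ) 1))
    (hf'0 : deriv f 0 = 1)
    (hne : ∀ z ∈ ball (0:ℂ) 1, deriv f z ≠ 0)
    (hre : ∀ z ∈ ball (0:ℂ) 1, (1 + z * deriv (deriv f) z / deriv f z).re < 3 / 2) :
    ∀ z ∈ ball (0:ℂ) 1, ‖deriv f z - 1‖ < 1 := by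
  intro z hz
  by_contra! hz_ge
  set w := fun ζ => deriv f ζ - 1 with hw_def
  have hw : DifferentiableOn ℂ w (ball 0 1) :=
    (hf.analyticOnNhd isOpen_ball).deriv.differentiableOn.sub_const 1
  have hsub : closedBall (0 : ℂ) ‖z‖ ⊆ ball 0 1 := closedBall_subset_ball (mem_ball_zero_iff.1 hz)
  obtain ⟨z₀, hz₀, hmax⟩ := (isCompact_closedBall (0 : ℂ) ‖z‖).exists_isMaxOn
    (nonempty_closedBall.2 (norm_nonneg z)) (hw.continuousOn.mono hsub).norm
  have hz₀_ball : z₀ ∈ ball 0 1 := hsub hz₀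
  have hwz₀ : 1 ≤ ‖w z₀‖ := hz_ge.trans (hmax (mem_closedBall_zero_iff.2 le_rfl))
  obtain ⟨k, hk, hjack⟩ := exists_one_le_mul_deriv_eq_mul
    (hw.mono (ball_subset_ball (mem_ball_zero_iff.1 hz₀_ball).le))
    (hw.differentiableAt (isOpen_ball.mem_nhds hz₀_ball)) (by simp [hw_def, hf'0])
    (norm_pos_iff.1 (by linarith))
    (hmax.on_subset (closedBall_subset_closedBall (mem_closedBall_zero_iff.1 hz₀)))
  have hderiv : deriv (deriv f) z₀ = deriv w z₀ := (deriv_sub_const _).symm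
  have hf' : deriv f z₀ = 1 + w z₀ := by simp [hw_def]
  have hlt := hre z₀ hz₀_ball
  rw [hderiv, hjack, hf', add_re, one_re] at hlt
  linarith [half_le_re_mul_div_one_add hwz₀ (hf' ▸ hne z₀ hz₀_ball) hk]

theorem deriv_near_one_of_N32 (f : ℂ → ℂ)
    (hf : DifferentiableOn ℂ f (ball (0:ℂ) 1))
    (hf0 : f 0 = 0) (hf'0 : deriv f 0 = 1)
    (hne : ∀ z ∈ ball (0:ℂ) 1, deriv f z ≠ 0)
    (hre : ∀ z ∈ ball (0:ℂ) 1, (1 + z * deriv (deriv f) z / deriv f z).re < 3 / 2) :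
    ∀ z ∈ ball (0:ℂ) 1, ‖deriv f z - 1‖ < 1 :=
  deriv_near_one_of_N32_general f hf hf'0 hne hre
end
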